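/- Every element of g(S) can be written uniquely in the form Σ_{i=0}^{m-1} z^i y_i with y_0, …, y_{m-1} ∈ L(g,σ). Consequently the S-linear map S ⊗_R L(g,σ) → g(S) determined by s ⊗ y ↦ s·y is an isomorphism of Lie algebras over S; that is, L(g,σ) is an S/R form of g(R) := g ⊗_k R. -/

import Mathlib

open scoped TensorProduct
open LaurentPolynomial

set_option maxHeartbeats 1000000
set_option synthInstance.maxHeartbeats 400000

noncomputable section

namespace LoopPaper

variable {k : Type*} [Field k] {g : Type*} [LieRing g] [LieAlgebra k g]

/-- A linear automorphism of a Lie algebra is a Lie algebra automorphism if it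
preserves brackets. -/
def IsLieAut (σ : g ≃ₗ[k] g) : Prop := ∀ x y : g, σ ⁅x, y⁆ = ⁅σ x, σ y⁆

theorem IsLieAut.one : IsLieAut (1 : g ≃ₗ[k] g) := fun _ _ => rfl

theorem IsLieAut.mul {σ τ : g ≃ₗ[k] g} (hσ : IsLieAut σ) (hτ : IsLieAut τ) :
    IsLieAut (σ * τ) := fun x y => by
  show σ (τ ⁅x, y⁆) = ⁅σ (τ x), σ (τ y)⁆
  rw [hτ, hσ]

theorem IsLieAut.inv {σ : g ≃ₗ[k] g} (hσ : IsLieAut σ) : IsLieAut σ⁻¹ := fun x y => by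
  apply σ.injective
  have h1 : ∀ z, σ (σ⁻¹ z) = z := fun z => σ.apply_symm_apply z
  rw [h1, hσ, h1, h1]

/-! ### The variable-scaling automorphism `z ↦ c z` of `k[z,z⁻¹]` -/

/-- The unit `c^n • z^n` of the Laurent polynomial ring. -/
def scaleUnit (c : kˣ) (n : ℤ) : (LaurentPolynomial k)ˣ where
  val := ((c ^ n : kˣ) : k) • T n
  inv := ((c ^ (-n) : kˣ) : k) • T (-n)
  val_inv := by
    rw [smul_mul_smul_comm, ← T_add, ← Units.val_mul, ← zpow_add, add_neg_cancel, zpow_zero,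
      Units.val_one, T_zero, one_smul]
  inv_val := by
    rw [smul_mul_smul_comm, ← T_add, ← Units.val_mul, ← zpow_add, neg_add_cancel, zpow_zero,
      Units.val_one, T_zero, one_smul]

/-- The homomorphism `n ↦ c^n • z^n` from `ℤ` to the units of `k[z,z⁻¹]`. -/
def scaleUnitHom (c : kˣ) : Multiplicative ℤ →* (LaurentPolynomial k)ˣ where
  toFun n := scaleUnit c n.toAdd
  map_one' := Units.ext (by
    show ((c ^ (0 : ℤ) : kˣ) : k) • T (0 : ℤ) = 1
    rw [zpow_zero, Units.val_one, T_zero, one_smul])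
  map_mul' a b := Units.ext (by
    show ((c ^ (a.toAdd + b.toAdd) : kˣ) : k) • T (a.toAdd + b.toAdd) =
      (((c ^ a.toAdd : kˣ) : k) • T a.toAdd) * (((c ^ b.toAdd : kˣ) : k) • T b.toAdd)
    rw [smul_mul_smul_comm, ← T_add, ← Units.val_mul, ← zpow_add])

/-- The `k`-algebra endomorphism of `k[z,z⁻¹]` with `z ↦ c z`. -/
def scaleVar (c : kˣ) : LaurentPolynomial k →ₐ[k] LaurentPolynomial k :=
  AddMonoidAlgebra.lift k (LaurentPolynomial k) ℤ ((Units.coeHom _).comp (scaleUnitHom c))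

theorem scaleVar_T (c : kˣ) (n : ℤ) : scaleVar c (T n) = ((c ^ n : kˣ) : k) • T n := by
  have h : (T n : LaurentPolynomial k) = AddMonoidAlgebra.of k ℤ (Multiplicative.ofAdd n) := rfl
  rw [h, scaleVar, AddMonoidAlgebra.lift_of]
  rfl

theorem scaleVar_comp (c d : kˣ) :
    (scaleVar c).comp (scaleVar d) = scaleVar (k := k) (c * d) := by
  apply AddMonoidAlgebra.algHom_ext
  intro n
  have hT : (AddMonoidAlgebra.single n 1 : LaurentPolynomial k) = T n := rfl
  simp only [AlgHom.coe_comp, Function.comp_apply, hT]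
  rw [scaleVar_T, map_smul, scaleVar_T, smul_smul, scaleVar_T]
  congr 1
  rw [mul_zpow, Units.val_mul, mul_comm]
  exact Subsingleton.elim _ _

theorem scaleVar_id : scaleVar (1 : kˣ) = AlgHom.id k (LaurentPolynomial k) := by
  apply AddMonoidAlgebra.algHom_ext
  intro n
  have hT : (AddMonoidAlgebra.single n 1 : LaurentPolynomial k) = T n := rfl
  simp only [hT, AlgHom.coe_id, id_eq]
  rw [scaleVar_T, one_zpow, Units.val_one, one_smul]
  exact Subsingleton.elim _ _

/-- The `k`-algebra automorphism of `k[z,z⁻¹]` with `z ↦ c z`. -/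
def scaleVarEquiv (c : kˣ) : LaurentPolynomial k ≃ₐ[k] LaurentPolynomial k :=
  AlgEquiv.ofAlgHom (scaleVar c) (scaleVar c⁻¹)
    (by rw [scaleVar_comp, mul_inv_cancel, scaleVar_id])
    (by rw [scaleVar_comp, inv_mul_cancel, scaleVar_id])

theorem scaleVarEquiv_apply (c : kˣ) (p : LaurentPolynomial k) :
    scaleVarEquiv c p = scaleVar c p := rfl


/-- `R = k[t,t⁻¹]`, identified with the `k`-subalgebra of `S = k[z,z⁻¹]` generated by
`t = z^m` and `t⁻¹ = z^{-m}`. -/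
def Rsub (k : Type*) [Field k] (m : ℕ) : Subalgebra k (LaurentPolynomial k) :=
  Algebra.adjoin k {T (m : ℤ), T (-(m : ℤ))}

/-- `g(S) = g ⊗_k S` is a Lie algebra over `k` (by restriction from `S`). -/
instance instLieAlgebraTensorBase : LieAlgebra k (LaurentPolynomial k ⊗[k] g) where
  lie_smul c x y := by
    have h := lie_smul (algebraMap k (LaurentPolynomial k) c) x y
    rwa [algebraMap_smul, algebraMap_smul] at h

/-- The underlying submodule `⊕_{i ∈ ℤ} g_ī ⊗ z^i` of the loop algebra. -/
def loopCarrier (ζ : k) (σ : g ≃ₗ[k] g) : Submodule k (LaurentPolynomial k ⊗[k] g) :=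
  Submodule.span k {p | ∃ (i : ℤ) (x : g), σ x = ζ ^ i • x ∧ p = T i ⊗ₜ[k] x}

theorem loop_lie_mem {ζ : k} (hζ0 : ζ ≠ 0) {σ : g ≃ₗ[k] g} (hbr : IsLieAut σ)
    {x y : LaurentPolynomial k ⊗[k] g} (hx : x ∈ loopCarrier ζ σ) (hy : y ∈ loopCarrier ζ σ) :
    ⁅x, y⁆ ∈ loopCarrier ζ σ := by
  have key : ∀ p ∈ {p : LaurentPolynomial k ⊗[k] g |
      ∃ (i : ℤ) (x : g), σ x = ζ ^ i • x ∧ p = T i ⊗ₜ[k] x},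
      ∀ q, q ∈ loopCarrier ζ σ → ⁅p, q⁆ ∈ loopCarrier ζ σ := by
    rintro p ⟨i, a, ha, rfl⟩ q hq
    unfold loopCarrier at hq ⊢
    induction hq using Submodule.span_induction with
    | mem q hq =>
      obtain ⟨j, b, hb, rfl⟩ := hq
      rw [LieAlgebra.ExtendScalars.bracket_tmul, ← T_add]
      refine Submodule.subset_span ⟨i + j, ⁅a, b⁆, ?_, rfl⟩
      rw [hbr, ha, hb, smul_lie, lie_smul, smul_smul, ← zpow_add₀ hζ0]
    | zero =>
      have h0 : ⁅(T i ⊗ₜ[k] a : LaurentPolynomial k ⊗[k] g), (0 : LaurentPolynomial k ⊗[k] g)⁆ = 0 :=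
        lie_zero (T i ⊗ₜ[k] a : LaurentPolynomial k ⊗[k] g)
      rw [h0]; exact zero_mem _
    | add q r _ _ hq hr =>
      have h0 : ⁅(T i ⊗ₜ[k] a : LaurentPolynomial k ⊗[k] g), q + r⁆ = ⁅T i ⊗ₜ[k] a, q⁆ + ⁅T i ⊗ₜ[k] a, r⁆ :=
        lie_add (T i ⊗ₜ[k] a : LaurentPolynomial k ⊗[k] g) q r
      rw [h0]; exact add_mem hq hr
    | smul c q _ hq =>
      have h0 : ⁅(T i ⊗ₜ[k] a : LaurentPolynomial k ⊗[k] g), c • q⁆ = c • ⁅T i ⊗ₜ[k] a, q⁆ :=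
        lie_smul c (T i ⊗ₜ[k] a : LaurentPolynomial k ⊗[k] g) q
      rw [h0]; exact Submodule.smul_mem _ _ hq
  unfold loopCarrier at hx
  induction hx using Submodule.span_induction with
  | mem p hp => exact key p hp y hy
  | zero =>
    have h0 : ⁅(0 : LaurentPolynomial k ⊗[k] g), y⁆ = 0 := zero_lie y
    rw [h0]; exact zero_mem _
  | add p r _ _ hp hr =>
    have h0 : ⁅p + r, y⁆ = ⁅p, y⁆ + ⁅r, y⁆ := add_lie p r y
    rw [h0]; exact add_mem hp hr
  | smul c p _ hp =>
    have h0 : ⁅c • p, y⁆ = c • ⁅p, y⁆ := smul_lie c p y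
    rw [h0]; exact Submodule.smul_mem _ _ hp

/-- The loop algebra `L(g,σ) = ⊕_{i ∈ ℤ} g_ī ⊗ z^i`, a Lie subalgebra (over `k`)
of `g(S) = g ⊗_k S`.  Here `m` is a period of `σ` and `ζ` is the chosen root of unity. -/
def loopAlgebra (m : ℕ) (ζ : k) (hζ0 : ζ ≠ 0) (hζm : ζ ^ m = 1) (σ : g ≃ₗ[k] g)
    (hbr : IsLieAut σ) (hσ : σ ^ m = 1) : LieSubalgebra k (LaurentPolynomial k ⊗[k] g) where
  __ := loopCarrier ζ σ
  lie_mem' := fun hx hy => loop_lie_mem hζ0 hbr hx hy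

theorem mem_loopAlgebra_iff {m : ℕ} {ζ : k} {hζ0 : ζ ≠ 0} {hζm : ζ ^ m = 1} {σ : g ≃ₗ[k] g}
    {hbr : IsLieAut σ} {hσ : σ ^ m = 1} {x : LaurentPolynomial k ⊗[k] g} :
    x ∈ loopAlgebra m ζ hζ0 hζm σ hbr hσ ↔ x ∈ loopCarrier ζ σ := Iff.rfl

theorem T_smul_loop {ζ : k} (hζ0 : ζ ≠ 0) {σ : g ≃ₗ[k] g} {j : ℤ} (hj : ζ ^ j = 1)
    {x : LaurentPolynomial k ⊗[k] g} (hx : x ∈ loopCarrier ζ σ) :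
    (T j : LaurentPolynomial k) • x ∈ loopCarrier ζ σ := by
  unfold loopCarrier at hx ⊢
  induction hx using Submodule.span_induction with
  | mem p hp =>
    obtain ⟨i, a, ha, rfl⟩ := hp
    rw [TensorProduct.smul_tmul', smul_eq_mul, ← T_add]
    refine Submodule.subset_span ⟨j + i, a, ?_, rfl⟩
    rw [ha, zpow_add₀ hζ0, hj, one_mul]
  | zero => rw [smul_zero]; exact zero_mem _
  | add p q _ _ hp hq => rw [smul_add]; exact add_mem hp hq
  | smul c p _ hp =>
    rw [smul_comm]
    exact Submodule.smul_mem _ _ hp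

theorem Rsub_smul_loop {m : ℕ} {ζ : k} (hζ0 : ζ ≠ 0) (hζm : ζ ^ m = 1) {σ : g ≃ₗ[k] g}
    {r : LaurentPolynomial k} (hr : r ∈ Rsub k m) :
    ∀ x ∈ loopCarrier ζ σ, r • x ∈ loopCarrier (g := g) ζ σ := by
  induction hr using Algebra.adjoin_induction with
  | mem s hs =>
    intro x hx
    rcases hs with rfl | rfl
    · refine T_smul_loop hζ0 ?_ hx
      rw [zpow_natCast, hζm]
    · refine T_smul_loop hζ0 ?_ hx
      rw [zpow_neg, zpow_natCast, hζm, inv_one]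
  | algebraMap c =>
    intro x hx
    rw [algebraMap_smul]
    exact Submodule.smul_mem _ _ hx
  | add r s _ _ hr hs =>
    intro x hx
    rw [add_smul]
    exact add_mem (hr x hx) (hs x hx)
  | mul r s _ _ hr hs =>
    intro x hx
    rw [mul_smul]
    exact hr _ (hs x hx)


/-- The action of `R` on the loop algebra. -/
instance loopSMulR {m : ℕ} {ζ : k} {hζ0 : ζ ≠ 0} {hζm : ζ ^ m = 1} {σ : g ≃ₗ[k] g}
    {hbr : IsLieAut σ} {hσ : σ ^ m = 1} :
    SMul ↥(Rsub k m) ↥(loopAlgebra m ζ hζ0 hζm σ hbr hσ) where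
  smul r x := ⟨(r : LaurentPolynomial k) • (x : LaurentPolynomial k ⊗[k] g),
    Rsub_smul_loop hζ0 hζm r.2 _ x.2⟩

theorem loop_smul_coe {m : ℕ} {ζ : k} {hζ0 : ζ ≠ 0} {hζm : ζ ^ m = 1} {σ : g ≃ₗ[k] g}
    {hbr : IsLieAut σ} {hσ : σ ^ m = 1} (r : ↥(Rsub k m))
    (x : ↥(loopAlgebra m ζ hζ0 hζm σ hbr hσ)) :
    ((r • x : ↥(loopAlgebra m ζ hζ0 hζm σ hbr hσ)) : LaurentPolynomial k ⊗[k] g)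
      = (r : LaurentPolynomial k) • (x : LaurentPolynomial k ⊗[k] g) := rfl

/-- The loop algebra is a module over `R = k[t,t⁻¹] ⊆ k[z,z⁻¹]`. -/
instance loopModuleR {m : ℕ} {ζ : k} {hζ0 : ζ ≠ 0} {hζm : ζ ^ m = 1} {σ : g ≃ₗ[k] g}
    {hbr : IsLieAut σ} {hσ : σ ^ m = 1} :
    Module ↥(Rsub k m) ↥(loopAlgebra m ζ hζ0 hζm σ hbr hσ) where
  one_smul x := Subtype.ext (by simp [loop_smul_coe])
  mul_smul r s x := Subtype.ext (by simp [loop_smul_coe, mul_smul])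
  smul_zero r := Subtype.ext (by simp [loop_smul_coe])
  smul_add r x y := Subtype.ext (by simp [loop_smul_coe, smul_add])
  add_smul r s x := Subtype.ext (by simp [loop_smul_coe, add_smul])
  zero_smul x := Subtype.ext (by simp [loop_smul_coe])


/-- The inclusion of the loop algebra in `g(S)`, as an `R`-linear map. -/
def loopIncl (m : ℕ) (ζ : k) (hζ0 : ζ ≠ 0) (hζm : ζ ^ m = 1) (σ : g ≃ₗ[k] g)
    (hbr : IsLieAut σ) (hσ : σ ^ m = 1) :
    ↥(loopAlgebra m ζ hζ0 hζm σ hbr hσ) →ₗ[↥(Rsub k m)] (LaurentPolynomial k ⊗[k] g) where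
  toFun x := ↑x
  map_add' _ _ := rfl
  map_smul' _ _ := rfl

/-- The eigenspace `{x ∈ g : σ(x) = c x}`. -/
def eigSpace (σ : g ≃ₗ[k] g) (c : k) : Submodule k g where
  carrier := {x | σ x = c • x}
  add_mem' := by
    intro x y hx hy
    show σ (x + y) = c • (x + y)
    rw [map_add, hx, hy, smul_add]
  zero_mem' := by
    show σ 0 = c • (0 : g)
    rw [map_zero, smul_zero]
  smul_mem' := by
    intro t x hx
    show σ (t • x) = c • t • x
    rw [map_smul, hx, smul_comm]

/-- The `R`-algebra automorphism `id ⊗ ι_i` of `g(S)`, where `ι_i(z) = ζ^i z`. -/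
def idTensorIota (ζ : k) (hζ0 : ζ ≠ 0) (i : ℤ) :
    (LaurentPolynomial k ⊗[k] g) ≃ₗ[k] (LaurentPolynomial k ⊗[k] g) :=
  TensorProduct.congr (scaleVarEquiv (Units.mk0 ζ hζ0 ^ i)).toLinearEquiv (LinearEquiv.refl k g)

/-- A `k`-linear automorphism of `g(S)` lies in `Aut_S(g(S))` if it is `S`-linear and
preserves brackets. -/
def IsSAut (f : (LaurentPolynomial k ⊗[k] g) ≃ₗ[k] (LaurentPolynomial k ⊗[k] g)) : Prop :=
  (∀ (s : LaurentPolynomial k) (x : LaurentPolynomial k ⊗[k] g), f (s • x) = s • f x) ∧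
    ∀ x y : LaurentPolynomial k ⊗[k] g, f ⁅x, y⁆ = ⁅f x, f y⁆

/-- The action of `ī ∈ Γ = ℤ/mℤ` on `Aut_S(g(S))`:  `ⁱτ = (id ⊗ ι_i) ∘ τ ∘ (id ⊗ ι_i)⁻¹`. -/
def gammaAct (ζ : k) (hζ0 : ζ ≠ 0) (i : ℤ)
    (τ : (LaurentPolynomial k ⊗[k] g) ≃ₗ[k] (LaurentPolynomial k ⊗[k] g)) :
    (LaurentPolynomial k ⊗[k] g) ≃ₗ[k] (LaurentPolynomial k ⊗[k] g) :=
  ((idTensorIota (g := g) ζ hζ0 i).symm.trans τ).trans (idTensorIota ζ hζ0 i)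

/-- A family `u_ī`, `ī ∈ Γ = ℤ/mℤ` (presented as a function on integer representatives),
is a 1-cocycle on `Γ` in `Aut_S(g(S))` if each `u_i` is an `S`-algebra automorphism,
`u_i` depends only on `i` mod `m`, and `u_{i+j} = u_i ∘ ⁱ(u_j)`. -/
def IsCocycle (m : ℕ) (ζ : k) (hζ0 : ζ ≠ 0)
    (u : ℤ → ((LaurentPolynomial k ⊗[k] g) ≃ₗ[k] (LaurentPolynomial k ⊗[k] g))) : Prop :=
  (∀ i : ℤ, IsSAut (u i)) ∧ (∀ i j : ℤ, (i : ZMod m) = (j : ZMod m) → u i = u j) ∧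
    ∀ i j : ℤ, u (i + j) = (gammaAct ζ hζ0 i (u j)).trans (u i)

/-- The fixed point set `g(S)_u = {x : (u_ī ∘ (id ⊗ ι_i)) x = x for all ī}` of a 1-cocycle. -/
def cocycleFixed (ζ : k) (hζ0 : ζ ≠ 0)
    (u : ℤ → ((LaurentPolynomial k ⊗[k] g) ≃ₗ[k] (LaurentPolynomial k ⊗[k] g))) :
    Set (LaurentPolynomial k ⊗[k] g) :=
  {x | ∀ i : ℤ, u i (idTensorIota ζ hζ0 i x) = x}

/-!
Let `ε = ι_{-1} ⊗ σ` be the automorphism `z^n ⊗ v ↦ ζ^{-n} z^n ⊗ σ v` of `g(S)`. It fixes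
`L(g,σ)` pointwise, so for `y ∈ L(g,σ)` the element `z^c y` is a `ζ^{-c}`-eigenvector of `ε`.
A primitive `m`-th root of unity forces `m ≠ 0` in `k`, so we may average:
`P = (1/m) ∑_{a<m} ε^a`. On `z^n ⊗ v` it gives `z^n ⊗ π v`, with `π` the average of the order-`m`
map `ζ^{-n} σ`, whose image lies in the `ζ^n`-eigenspace of `σ`; hence `P` maps into `L(g,σ)`.
By orthogonality of characters `P (z^c y)` is `z^c y` if `m ∣ c` and `0` otherwise, so the
coefficients of any `x = ∑_{i<m} z^i y_i` are forced to be `y_i = P (z^{-i} x)`, and the same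
orthogonality shows that these do sum back to `x`. Since `z^{mq} ∈ R`, every element of
`S ⊗_R L(g,σ)` is of the form `∑_{i<m} z^i ⊗ y_i`, and the unique decomposition becomes bijectivity.
-/

theorem _root_.IsPrimitiveRoot.natCast_ne_zero {ζ : k} {m : ℕ} (hζ : IsPrimitiveRoot ζ m)
    (hm : 0 < m) : (m : k) ≠ 0 :=
  haveI : NeZero m := ⟨hm.ne'⟩
  hζ.neZero'.out

theorem _root_.IsPrimitiveRoot.geom_sum_zpow {ζ : k} {m : ℕ} (hζ : IsPrimitiveRoot ζ m)
    (c : ℤ) : ∑ a ∈ Finset.range m, (ζ ^ c) ^ a = if (m : ℤ) ∣ c then (m : k) else 0 := by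
  split_ifs with hc
  · simp [(hζ.zpow_eq_one_iff_dvd c).mpr hc]
  · have hne : ζ ^ c - 1 ≠ 0 := sub_ne_zero.mpr (mt (hζ.zpow_eq_one_iff_dvd c).mp hc)
    have hpow : (ζ ^ c) ^ m = 1 := by
      rw [← zpow_natCast, ← zpow_mul, mul_comm, zpow_mul, zpow_natCast, hζ.pow_eq_one, one_zpow]
    refine (mul_eq_zero.mp ?_).resolve_left hne
    rw [mul_geom_sum, hpow, sub_self]

section Averaging

variable {V W : Type*} [AddCommGroup V] [Module k V] [AddCommGroup W] [Module k W]

def average (m : ℕ) (f : Module.End k V) : Module.End k V :=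
  (m : k)⁻¹ • ∑ a ∈ Finset.range m, f ^ a

theorem average_apply (m : ℕ) (f : Module.End k V) (v : V) :
    average m f v = (m : k)⁻¹ • ∑ a ∈ Finset.range m, (f ^ a) v := by
  simp [average, LinearMap.sum_apply]

theorem mul_average_of_pow_eq_one {m : ℕ} {f : Module.End k V} (hf : f ^ m = 1) :
    f * average m f = average m f := by
  have h := mul_geom_sum f m
  rw [hf, sub_self, sub_mul, one_mul, sub_eq_zero] at h
  rw [average, mul_smul_comm, h]

theorem average_comp {m : ℕ} {f : Module.End k V} {f' : Module.End k W} {h : V →ₗ[k] W}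
    (hh : f' ∘ₗ h = h ∘ₗ f) : average m f' ∘ₗ h = h ∘ₗ average m f := by
  ext v
  simp only [LinearMap.comp_apply, average_apply, map_smul, map_sum]
  congr 1
  exact Finset.sum_congr rfl fun a _ =>
    LinearMap.congr_fun (Module.End.commute_pow_left_of_commute hh a) v

theorem average_apply_of_apply_eq_smul {m : ℕ} {f : Module.End k V} {c : k} {v : V}
    (hv : f v = c • v) : average m f v = ((m : k)⁻¹ * ∑ a ∈ Finset.range m, c ^ a) • v := by
  have hpow : ∀ a : ℕ, (f ^ a) v = c ^ a • v := by
    intro a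
    induction a with
    | zero => simp
    | succ a ih => rw [pow_succ', Module.End.mul_apply, ih, map_smul, hv, smul_smul, pow_succ]
  simp only [average_apply, hpow, ← Finset.sum_smul, mul_smul]

theorem average_apply_of_apply_eq_zpow_smul {m : ℕ} {ζ : k} (hζ : IsPrimitiveRoot ζ m) (hm : 0 < m)
    {f : Module.End k V} {c : ℤ} {v : V} (hv : f v = ζ ^ c • v) :
    average m f v = if (m : ℤ) ∣ c then v else 0 := by
  rw [average_apply_of_apply_eq_smul hv, hζ.geom_sum_zpow]
  split_ifs
  · rw [inv_mul_cancel₀ (hζ.natCast_ne_zero hm), one_smul]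
  · rw [mul_zero, zero_smul]

theorem apply_average_inv_smul {m : ℕ} {ζ : k} (hζ0 : ζ ≠ 0) (hζm : ζ ^ m = 1)
    {f : Module.End k V} (hf : f ^ m = 1) (n : ℤ) (v : V) :
    f (average m ((ζ ^ n)⁻¹ • f) v) = ζ ^ n • average m ((ζ ^ n)⁻¹ • f) v := by
  have hζn : ζ ^ n ≠ 0 := zpow_ne_zero n hζ0
  have hpow : ((ζ ^ n)⁻¹ • f) ^ m = 1 := by
    rw [smul_pow, hf, inv_pow, ← zpow_natCast, ← zpow_mul, mul_comm, zpow_mul, zpow_natCast,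
      hζm, one_zpow, inv_one, one_smul]
  calc f (average m ((ζ ^ n)⁻¹ • f) v)
      = ζ ^ n • (((ζ ^ n)⁻¹ • f) * average m ((ζ ^ n)⁻¹ • f)) v := by
        rw [Module.End.mul_apply, LinearMap.smul_apply, smul_inv_smul₀ hζn]
    _ = ζ ^ n • average m ((ζ ^ n)⁻¹ • f) v := by rw [mul_average_of_pow_eq_one hpow]

end Averaging

@[elab_as_elim]
theorem induction_on_T_tmul {V : Type*} [AddCommGroup V] [Module k V]
    {motive : LaurentPolynomial k ⊗[k] V → Prop} (x : LaurentPolynomial k ⊗[k] V)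
    (zero : motive 0) (add : ∀ x y, motive x → motive y → motive (x + y))
    (T_tmul : ∀ (n : ℤ) (v : V), motive (T n ⊗ₜ v)) : motive x := by
  induction x using TensorProduct.induction_on with
  | zero => exact zero
  | add x y hx hy => exact add x y hx hy
  | tmul s v =>
    induction s using LaurentPolynomial.induction_on' with
    | add p q hp hq => rw [TensorProduct.add_tmul]; exact add _ _ hp hq
    | C_mul_T n a => rw [← smul_eq_C_mul, TensorProduct.smul_tmul]; exact T_tmul n _

def loopTwist {ζ : k} (hζ0 : ζ ≠ 0) (σ : g ≃ₗ[k] g) : Module.End k (LaurentPolynomial k ⊗[k] g) :=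
  (idTensorIota ζ hζ0 (-1)).toLinearMap ∘ₗ LinearMap.lTensor _ σ.toLinearMap

section LoopTwist

variable {m : ℕ} {ζ : k} (hζ0 : ζ ≠ 0) {σ : g ≃ₗ[k] g}

theorem loopTwist_T_tmul (n : ℤ) (v : g) :
    loopTwist hζ0 σ (T n ⊗ₜ v) = T n ⊗ₜ ((ζ ^ n)⁻¹ • σ v) := by
  simp [loopTwist, idTensorIota, scaleVarEquiv_apply, scaleVar_T, TensorProduct.smul_tmul]

theorem loopTwist_T_smul (c : ℤ) (x : LaurentPolynomial k ⊗[k] g) :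
    loopTwist hζ0 σ ((T c : LaurentPolynomial k) • x) =
      (ζ ^ c)⁻¹ • (T c : LaurentPolynomial k) • loopTwist hζ0 σ x := by
  induction x using induction_on_T_tmul with
  | zero => simp only [smul_zero, map_zero]
  | add x y hx hy => simp only [smul_add, map_add, hx, hy]
  | T_tmul n v =>
    rw [TensorProduct.smul_tmul', smul_eq_mul, ← T_add, loopTwist_T_tmul, loopTwist_T_tmul,
      TensorProduct.smul_tmul', smul_eq_mul, ← T_add, ← TensorProduct.tmul_smul, smul_smul,
      zpow_add₀ hζ0, mul_inv]

theorem loopTwist_pow_T_smul (a : ℕ) (c : ℤ) (x : LaurentPolynomial k ⊗[k] g) :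
    (loopTwist hζ0 σ ^ a) ((T c : LaurentPolynomial k) • x) =
      ((ζ ^ c)⁻¹) ^ a • (T c : LaurentPolynomial k) • (loopTwist hζ0 σ ^ a) x := by
  induction a with
  | zero => simp
  | succ a ih =>
    rw [pow_succ', Module.End.mul_apply, ih, map_smul, loopTwist_T_smul, smul_smul, ← pow_succ,
      Module.End.mul_apply]

theorem loopTwist_apply_of_mem {y : LaurentPolynomial k ⊗[k] g} (hy : y ∈ loopCarrier ζ σ) :
    loopTwist hζ0 σ y = y := by
  refine LinearMap.eqOn_span' (g := LinearMap.id) ?_ hy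
  rintro _ ⟨i, v, hv, rfl⟩
  rw [LinearMap.id_apply, loopTwist_T_tmul, hv, smul_smul, inv_mul_cancel₀ (zpow_ne_zero i hζ0),
    one_smul]

theorem loopTwist_T_smul_of_mem (c : ℤ) {y : LaurentPolynomial k ⊗[k] g}
    (hy : y ∈ loopCarrier ζ σ) :
    loopTwist hζ0 σ ((T c : LaurentPolynomial k) • y) =
      ζ ^ (-c) • (T c : LaurentPolynomial k) • y := by
  rw [loopTwist_T_smul, loopTwist_apply_of_mem hζ0 hy, zpow_neg]

theorem average_loopTwist_T_tmul (n : ℤ) (v : g) :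
    average m (loopTwist hζ0 σ) (T n ⊗ₜ v) =
      T n ⊗ₜ average m ((ζ ^ n)⁻¹ • (σ : Module.End k g)) v := by
  refine LinearMap.congr_fun
    (average_comp (k := k) (h := TensorProduct.mk k (LaurentPolynomial k) g (T n)) ?_) v
  ext w
  simp [loopTwist_T_tmul]

theorem average_loopTwist_mem (hζm : ζ ^ m = 1) (hσ : σ ^ m = 1) (x : LaurentPolynomial k ⊗[k] g) :
    average m (loopTwist hζ0 σ) x ∈ loopCarrier ζ σ := by
  have hσ' : (σ : Module.End k g) ^ m = 1 := by
    rw [← LinearEquiv.automorphismGroup.toLinearMapMonoidHom_apply, ← map_pow, hσ, map_one]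
  induction x using induction_on_T_tmul with
  | zero => rw [map_zero]; exact zero_mem _
  | add x y hx hy => rw [map_add]; exact add_mem hx hy
  | T_tmul n v =>
    rw [average_loopTwist_T_tmul]
    exact Submodule.subset_span ⟨n, _, apply_average_inv_smul hζ0 hζm hσ' n v, rfl⟩

variable {hζ0}

theorem average_loopTwist_T_smul_of_mem (hζ : IsPrimitiveRoot ζ m) (hm : 0 < m) (c : ℤ)
    {y : LaurentPolynomial k ⊗[k] g} (hy : y ∈ loopCarrier ζ σ) :
    average m (loopTwist hζ0 σ) ((T c : LaurentPolynomial k) • y) =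
      if (m : ℤ) ∣ c then (T c : LaurentPolynomial k) • y else 0 := by
  rw [average_apply_of_apply_eq_zpow_smul hζ hm (loopTwist_T_smul_of_mem hζ0 c hy)]
  simp only [dvd_neg]

theorem T_smul_average_loopTwist_T_neg_smul (i : ℕ) (x : LaurentPolynomial k ⊗[k] g) :
    (T i : LaurentPolynomial k) • average m (loopTwist hζ0 σ) ((T (-i) : LaurentPolynomial k) • x) =
      (m : k)⁻¹ • ∑ a ∈ Finset.range m, (ζ ^ a) ^ i • (loopTwist hζ0 σ ^ a) x := by
  rw [average_apply, smul_comm, Finset.smul_sum]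
  congr 1
  refine Finset.sum_congr rfl fun a _ => ?_
  rw [loopTwist_pow_T_smul, smul_comm, smul_smul, ← T_add, add_neg_cancel, T_zero, one_smul,
    zpow_neg, inv_inv, zpow_natCast, ← pow_mul, ← pow_mul, mul_comm]

theorem sum_T_smul_average_loopTwist (hζ : IsPrimitiveRoot ζ m) (hm : 0 < m)
    (x : LaurentPolynomial k ⊗[k] g) :
    ∑ i : Fin m, (T i : LaurentPolynomial k) •
      average m (loopTwist hζ0 σ) ((T (-i) : LaurentPolynomial k) • x) = x := by
  have hchar : ∀ a ∈ Finset.range m,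
      (∑ i ∈ Finset.range m, (ζ ^ a) ^ i) • (loopTwist hζ0 σ ^ a) x =
        if a = 0 then (m : k) • x else 0 := by
    intro a ha
    rw [← zpow_natCast ζ a, hζ.geom_sum_zpow]
    rcases Nat.eq_zero_or_pos a with rfl | hpos
    · simp
    · have hndvd : ¬ (m : ℤ) ∣ a := by
        rw [Int.natCast_dvd_natCast]
        exact fun h => (Nat.le_of_dvd hpos h).not_gt (Finset.mem_range.mp ha)
      rw [if_neg hndvd, if_neg hpos.ne', zero_smul]
  rw [Fin.sum_univ_eq_sum_range (fun i => (T i : LaurentPolynomial k) •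
      average m (loopTwist hζ0 σ) ((T (-i) : LaurentPolynomial k) • x)),
    Finset.sum_congr rfl fun i _ => T_smul_average_loopTwist_T_neg_smul i x, ← Finset.smul_sum,
    Finset.sum_comm, Finset.sum_congr rfl fun a _ => (Finset.sum_smul).symm,
    Finset.sum_congr rfl hchar, Finset.sum_ite_eq' _ _, if_pos (Finset.mem_range.mpr hm),
    inv_smul_smul₀ (hζ.natCast_ne_zero hm)]

theorem eq_average_loopTwist_of_eq_sum (hζ : IsPrimitiveRoot ζ m) (hm : 0 < m)
    {y : Fin m → LaurentPolynomial k ⊗[k] g} (hy : ∀ i, y i ∈ loopCarrier ζ σ)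
    {x : LaurentPolynomial k ⊗[k] g} (hx : x = ∑ i : Fin m, (T i : LaurentPolynomial k) • y i)
    (j : Fin m) : y j = average m (loopTwist hζ0 σ) ((T (-j) : LaurentPolynomial k) • x) := by
  have hcomp : ∀ i : Fin m, average m (loopTwist hζ0 σ)
      ((T (-j) : LaurentPolynomial k) • (T i : LaurentPolynomial k) • y i) =
        if i = j then y i else 0 := by
    intro i
    rw [smul_smul, ← T_add, average_loopTwist_T_smul_of_mem hζ hm _ (hy i)]
    by_cases hij : i = j
    · subst hij
      rw [neg_add_cancel, if_pos (dvd_zero _), if_pos rfl, T_zero, one_smul]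
    · refine (if_neg fun hdvd => hij (Fin.ext ?_)).trans (if_neg hij).symm
      have := Int.eq_zero_of_abs_lt_dvd hdvd (abs_lt.mpr ⟨by omega, by omega⟩)
      omega
  rw [hx, Finset.smul_sum, map_sum, Finset.sum_congr rfl fun i _ => hcomp i,
    Finset.sum_ite_eq' Finset.univ j, if_pos (Finset.mem_univ j)]

end LoopTwist

theorem T_mul_mem_Rsub (m : ℕ) (q : ℤ) : (T (m * q) : LaurentPolynomial k) ∈ Rsub k m := by
  have hT : (T m : LaurentPolynomial k) ∈ Rsub k m := Algebra.subset_adjoin (Set.mem_insert _ _)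
  have hT' : (T (-m) : LaurentPolynomial k) ∈ Rsub k m :=
    Algebra.subset_adjoin (Set.mem_insert_of_mem _ rfl)
  induction q using Int.induction_on with
  | zero => rw [mul_zero, T_zero]; exact one_mem _
  | succ i ih => rw [mul_add, mul_one, T_add]; exact mul_mem ih hT
  | pred i ih => rw [mul_sub, mul_one, sub_eq_add_neg, T_add]; exact mul_mem ih hT'

section BaseChange

variable {m : ℕ} {M : Type*} [AddCommGroup M] [Module (Rsub k m) M]

theorem exists_T_tmul_eq (hm : 0 < m) (n : ℤ) (y : M) :
    ∃ (i : Fin m) (y' : M),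
      (T n : LaurentPolynomial k) ⊗ₜ[Rsub k m] y = (T i : LaurentPolynomial k) ⊗ₜ y' := by
  have hm' : (0 : ℤ) < m := Int.natCast_pos.mpr hm
  have hlt := Int.emod_lt_of_pos n hm'
  refine ⟨⟨(n % m).toNat, by omega⟩, (⟨T (m * (n / m)), T_mul_mem_Rsub m _⟩ : Rsub k m) • y, ?_⟩
  rw [← TensorProduct.smul_tmul, Subalgebra.smul_def, smul_eq_mul, ← T_add,
    Int.toNat_of_nonneg (Int.emod_nonneg n hm'.ne'), Int.mul_ediv_add_emod]

theorem exists_eq_sum_T_tmul (hm : 0 < m) (w : LaurentPolynomial k ⊗[Rsub k m] M) :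
    ∃ y : Fin m → M, w = ∑ i : Fin m, (T i : LaurentPolynomial k) ⊗ₜ y i := by
  have add : ∀ w w' : LaurentPolynomial k ⊗[Rsub k m] M,
      (∃ y : Fin m → M, w = ∑ i : Fin m, (T i : LaurentPolynomial k) ⊗ₜ y i) →
      (∃ y : Fin m → M, w' = ∑ i : Fin m, (T i : LaurentPolynomial k) ⊗ₜ y i) →
      ∃ y : Fin m → M, w + w' = ∑ i : Fin m, (T i : LaurentPolynomial k) ⊗ₜ y i := by
    rintro _ _ ⟨y, rfl⟩ ⟨y', rfl⟩
    exact ⟨y + y', by simp only [Pi.add_apply, TensorProduct.tmul_add, Finset.sum_add_distrib]⟩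
  induction w using TensorProduct.induction_on with
  | zero => exact ⟨0, by simp⟩
  | add w w' hw hw' => exact add w w' hw hw'
  | tmul s y =>
    induction s using LaurentPolynomial.induction_on' with
    | add p q hp hq => rw [TensorProduct.add_tmul]; exact add _ _ hp hq
    | C_mul_T n a =>
      obtain ⟨i, y', h⟩ := exists_T_tmul_eq (k := k) hm n (algebraMap k (Rsub k m) a • y)
      refine ⟨Pi.single i y', ?_⟩
      rw [← smul_eq_C_mul, ← algebraMap_smul (Rsub k m), TensorProduct.smul_tmul, h,
        Fintype.sum_eq_single i fun j hj => by rw [Pi.single_eq_of_ne hj, TensorProduct.tmul_zero],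
        Pi.single_eq_same]

end BaseChange

section Bijective

variable {m : ℕ} {ζ : k} {σ : g ≃ₗ[k] g} {hbr : IsLieAut σ} {hσ : σ ^ m = 1}

theorem liftBaseChange_loopIncl_sum_T_tmul {hζ0 : ζ ≠ 0} {hζm : ζ ^ m = 1}
    (y : Fin m → loopAlgebra m ζ hζ0 hζm σ hbr hσ) :
    LinearMap.liftBaseChange (LaurentPolynomial k) (loopIncl m ζ hζ0 hζm σ hbr hσ)
        (∑ i : Fin m, (T i : LaurentPolynomial k) ⊗ₜ y i) =
      ∑ i : Fin m, (T i : LaurentPolynomial k) • (y i : LaurentPolynomial k ⊗[k] g) := by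
  simp only [map_sum, LinearMap.liftBaseChange_tmul]
  rfl

theorem bijective_liftBaseChange_loopIncl (hm : 0 < m) (hζ : IsPrimitiveRoot ζ m) :
    Function.Bijective (LinearMap.liftBaseChange (LaurentPolynomial k)
      (loopIncl m ζ (hζ.ne_zero hm.ne') hζ.pow_eq_one σ hbr hσ)) := by
  have hζ0 := hζ.ne_zero hm.ne'
  refine ⟨fun w w' h => ?_, fun x => ?_⟩
  · obtain ⟨y, rfl⟩ := exists_eq_sum_T_tmul hm w
    obtain ⟨y', rfl⟩ := exists_eq_sum_T_tmul hm w'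
    rw [liftBaseChange_loopIncl_sum_T_tmul, liftBaseChange_loopIncl_sum_T_tmul] at h
    obtain rfl : y = y' := funext fun i => Subtype.ext <|
      (eq_average_loopTwist_of_eq_sum (hζ0 := hζ0) hζ hm (fun j => (y j).2) h.symm i).trans
        (eq_average_loopTwist_of_eq_sum hζ hm (fun j => (y' j).2) rfl i).symm
    rfl
  · refine ⟨∑ i : Fin m, (T i : LaurentPolynomial k) ⊗ₜ
      ⟨average m (loopTwist hζ0 σ) ((T (-i) : LaurentPolynomial k) • x),
        average_loopTwist_mem hζ0 hζ.pow_eq_one hσ _⟩, ?_⟩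
    rw [liftBaseChange_loopIncl_sum_T_tmul]
    exact sum_T_smul_average_loopTwist hζ hm x

end Bijective

theorem statement5_general {k : Type*} [Field k] {g : Type*} [LieRing g] [LieAlgebra k g]
    (m : ℕ) (hm : 0 < m) (ζ : k) (hζ : IsPrimitiveRoot ζ m)
    (σ : g ≃ₗ[k] g) (hbr : IsLieAut σ) (hσ : σ ^ m = 1) :
    (∀ x : LaurentPolynomial k ⊗[k] g,
      ∃! y : Fin m → LaurentPolynomial k ⊗[k] g,
        (∀ i, y i ∈ loopAlgebra m ζ (hζ.ne_zero hm.ne') hζ.pow_eq_one σ hbr hσ) ∧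
          x = ∑ i : Fin m, ((T (i : ℤ) : LaurentPolynomial k) • y i)) ∧
    (∀ (s : LaurentPolynomial k)
        (y : ↥(loopAlgebra m ζ (hζ.ne_zero hm.ne') hζ.pow_eq_one σ hbr hσ)),
      LinearMap.liftBaseChange (LaurentPolynomial k)
          (loopIncl m ζ (hζ.ne_zero hm.ne') hζ.pow_eq_one σ hbr hσ)
          (s ⊗ₜ[↥(Rsub k m)] y)
        = s • (y : LaurentPolynomial k ⊗[k] g)) ∧
    Function.Bijective
      (LinearMap.liftBaseChange (LaurentPolynomial k)
        (loopIncl m ζ (hζ.ne_zero hm.ne') hζ.pow_eq_one σ hbr hσ)) := by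
  have hζ0 := hζ.ne_zero hm.ne'
  refine ⟨fun x => ⟨fun i => average m (loopTwist hζ0 σ) ((T (-i) : LaurentPolynomial k) • x),
    ⟨fun _ => average_loopTwist_mem hζ0 hζ.pow_eq_one hσ _,
      (sum_T_smul_average_loopTwist hζ hm x).symm⟩,
    fun y ⟨hy, hx⟩ => funext (eq_average_loopTwist_of_eq_sum hζ hm hy hx)⟩,
    fun s y => LinearMap.liftBaseChange_tmul _ _ s y, bijective_liftBaseChange_loopIncl hm hζ⟩

/-- Every element of `g(S)` is uniquely of the form
`Σ_{i=0}^{m-1} z^i y_i` with `y_i ∈ L(g,σ)`; consequently the `S`-linear map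
`S ⊗_R L(g,σ) → g(S)`, `s ⊗ y ↦ s·y`, is an isomorphism of Lie algebras over `S`,
i.e. `L(g,σ)` is an `S/R` form of `g(R)`. -/
theorem statement5 {k : Type*} [Field k] [CharZero k] {g : Type*} [LieRing g] [LieAlgebra k g]
    (m : ℕ) (hm : 0 < m) (ζ : k) (hζ : IsPrimitiveRoot ζ m)
    (σ : g ≃ₗ[k] g) (hbr : IsLieAut σ) (hσ : σ ^ m = 1) :
    (∀ x : LaurentPolynomial k ⊗[k] g,
      ∃! y : Fin m → LaurentPolynomial k ⊗[k] g,
        (∀ i, y i ∈ loopAlgebra m ζ (hζ.ne_zero hm.ne') hζ.pow_eq_one σ hbr hσ) ∧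
          x = ∑ i : Fin m, ((T (i : ℤ) : LaurentPolynomial k) • y i)) ∧
    (∀ (s : LaurentPolynomial k)
        (y : ↥(loopAlgebra m ζ (hζ.ne_zero hm.ne') hζ.pow_eq_one σ hbr hσ)),
      LinearMap.liftBaseChange (LaurentPolynomial k)
          (loopIncl m ζ (hζ.ne_zero hm.ne') hζ.pow_eq_one σ hbr hσ)
          (s ⊗ₜ[↥(Rsub k m)] y)
        = s • (y : LaurentPolynomial k ⊗[k] g)) ∧
    Function.Bijective
      (LinearMap.liftBaseChange (LaurentPolynomial k)
        (loopIncl m ζ (hζ.ne_zero hm.ne') hζ.pow_eq_one σ hbr hσ)) :=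
  statement5_general m hm ζ hζ σ hbr hσ

end LoopPaper
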